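/- Consider exact natural policy gradient on a finite MDP with $\gamma \in (0,1)$: $\pi_{t+1}(a|s) = \pi_t(a|s)\exp(\beta_t Q^{\pi_t}(s,a)) / \sum_{a'}\pi_t(a'|s)\exp(\beta_t Q^{\pi_t}(s,a'))$, starting from the uniform policy $\pi_0$, with rewards in $[0,1]$. If the stepsizes satisfy $\beta_t \ge \log(1/\min_s \pi_t(a_{t,s}|s))/\gamma^{2t-1}$ for all $t$, where $a_{t,s} \in \arg\max_a Q^{\pi_t}(s,a)$, then $\|Q^* - Q^{\pi_T}\|_\infty \le \frac{3\gamma^T}{(1-\gamma)^2}$. -/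

import Mathlib

/-!
Both Bellman operators are monotone and add `γ c` when a constant `c` is added, so a function
below (above) its image lies below (above) the fixed point. This gives `0 ≤ Q^π ≤ Q* ≤ 1/(1-γ)`,
hence `Q* - Q^π ≤ γ/(1-γ)` for every policy; and since an exponential tilt of a distribution
raises the average of the tilting function, the NPG values `Q^{π_t}` increase with `t`.

The stepsize makes the update nearly greedy. With `m ≤ π_t(a_{t,s}|s)`, `L = log (1/m)` and
`c = γ^(2t-1)`, an action whose gap `x` to the maximum exceeds `c` keeps at most `m^(x/c)` of its
weight relative to `a_{t,s}`, and all these actions (total mass `≤ 1 - m`) contribute at most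
`c m` to the tilted average of `x - c`, which is compensated by `a_{t,s}` itself. So the
`π_{t+1}`-average of `Q^{π_t}(s, ·)` is within `c` of its maximum, and `δ_t = max (Q* - Q^{π_t})`
satisfies `δ_{t+1} ≤ γ (δ_t + γ^(2t-1))`. From `δ_1 ≤ γ/(1-γ)` induction gives
`δ_T ≤ γ^T (2 - γ^(T-1)) / (1-γ) ≤ 3 γ^T / (1-γ)^2`.
-/

open Finset

/-- The Bellman operator of a policy `π` on a finite MDP. -/
noncomputable def bellmanPolicy {S A : Type} [Fintype S] [Fintype A]
    (R : S → A → ℝ) (P : S → A → S → ℝ) (γ : ℝ) (π : S → A → ℝ)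
    (Q : S × A → ℝ) : S × A → ℝ :=
  fun p => R p.1 p.2 + γ * ∑ s', P p.1 p.2 s' * ∑ a', π s' a' * Q (s', a')

/-- The Bellman optimality operator on a finite MDP. -/
noncomputable def bellmanOpt {S A : Type} [Fintype S] [Fintype A] [Nonempty A]
    (R : S → A → ℝ) (P : S → A → S → ℝ) (γ : ℝ)
    (Q : S × A → ℝ) : S × A → ℝ :=
  fun p => R p.1 p.2 + γ * ∑ s', P p.1 p.2 s' *
    (Finset.univ.sup' Finset.univ_nonempty (fun a' => Q (s', a')))

section ExpTilt

variable {ι : Type*} [Fintype ι]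

theorem sum_mul_le_of_forall_le {w q : ι → ℝ} {B : ℝ} (hw : ∀ i, 0 ≤ w i)
    (hsum : ∑ i, w i = 1) (hq : ∀ i, q i ≤ B) : ∑ i, w i * q i ≤ B :=
  calc ∑ i, w i * q i ≤ ∑ i, w i * B :=
        sum_le_sum fun i _ => mul_le_mul_of_nonneg_left (hq i) (hw i)
    _ = B := by rw [← sum_mul, hsum, one_mul]

-- The NPG update is `π_{t+1}(·|s) = expTilt (π_t(·|s)) (β_t Q^{π_t}(s, ·))`.
noncomputable def expTilt (p f : ι → ℝ) (i : ι) : ℝ :=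
  p i * Real.exp (f i) / ∑ j, p j * Real.exp (f j)

variable {p : ι → ℝ}

theorem sum_mul_exp_pos (hp : ∀ i, 0 ≤ p i) (hsum : ∑ i, p i = 1) (f : ι → ℝ) :
    0 < ∑ i, p i * Real.exp (f i) := by
  obtain ⟨i, -, hi⟩ := exists_lt_of_sum_lt (s := univ) (f := 0) (g := p) (by simp [hsum])
  exact sum_pos' (fun j _ => mul_nonneg (hp j) (Real.exp_pos _).le)
    ⟨i, mem_univ i, mul_pos hi (Real.exp_pos _)⟩

theorem expTilt_nonneg (hp : ∀ i, 0 ≤ p i) (hsum : ∑ i, p i = 1) (f : ι → ℝ) (i : ι) :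
    0 ≤ expTilt p f i :=
  div_nonneg (mul_nonneg (hp i) (Real.exp_pos _).le) (sum_mul_exp_pos hp hsum f).le

theorem expTilt_pos (hp : ∀ i, 0 < p i) (hsum : ∑ i, p i = 1) (f : ι → ℝ) (i : ι) :
    0 < expTilt p f i :=
  div_pos (mul_pos (hp i) (Real.exp_pos _)) (sum_mul_exp_pos (fun j => (hp j).le) hsum f)

theorem sum_expTilt_mul (p f g : ι → ℝ) :
    ∑ i, expTilt p f i * g i = (∑ i, p i * Real.exp (f i) * g i) / ∑ j, p j * Real.exp (f j) := by
  simp only [expTilt, div_mul_eq_mul_div, sum_div]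

theorem sum_expTilt (hp : ∀ i, 0 ≤ p i) (hsum : ∑ i, p i = 1) (f : ι → ℝ) :
    ∑ i, expTilt p f i = 1 := by
  simpa [div_self (sum_mul_exp_pos hp hsum f).ne'] using sum_expTilt_mul p f 1

theorem sum_expTilt_mul_sub (hp : ∀ i, 0 ≤ p i) (hsum : ∑ i, p i = 1) (f q : ι → ℝ) (r : ℝ) :
    ∑ i, expTilt p f i * (q i - r) = ∑ i, expTilt p f i * q i - r := by
  simp only [mul_sub, sum_sub_distrib, ← sum_mul, sum_expTilt hp hsum, one_mul]

theorem expTilt_iterate_pos {p f : ℕ → ι → ℝ} (h0 : ∀ i, 0 < p 0 i) (hsum0 : ∑ i, p 0 i = 1)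
    (hsucc : ∀ t, p (t + 1) = expTilt (p t) (f t)) (t : ℕ) : (∀ i, 0 < p t i) ∧ ∑ i, p t i = 1 := by
  induction t with
  | zero => exact ⟨h0, hsum0⟩
  | succ t ih =>
    rw [hsucc]
    exact ⟨expTilt_pos ih.1 ih.2 _, sum_expTilt (fun i => (ih.1 i).le) ih.2 _⟩

theorem sum_mul_le_sum_expTilt_mul (hp : ∀ i, 0 ≤ p i) (hsum : ∑ i, p i = 1) {β : ℝ}
    (hβ : 0 ≤ β) (q : ι → ℝ) :
    ∑ i, p i * q i ≤ ∑ i, expTilt p (fun i => β * q i) i * q i := by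
  set avg := ∑ i, p i * q i
  -- both factors of `(exp (β * q i) - exp (β * avg)) * (q i - avg)` have the sign of `q i - avg`
  have hterm : ∀ i, Real.exp (β * avg) * (q i - avg) ≤ Real.exp (β * q i) * (q i - avg) := by
    intro i
    rcases le_total avg (q i) with h | h
    · exact mul_le_mul_of_nonneg_right (Real.exp_le_exp.2 (by gcongr)) (sub_nonneg.2 h)
    · exact mul_le_mul_of_nonpos_right (Real.exp_le_exp.2 (by gcongr)) (sub_nonpos.2 h)
  have hcentered : 0 ≤ ∑ i, p i * Real.exp (β * q i) * (q i - avg) :=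
    calc 0 = ∑ i, p i * (Real.exp (β * avg) * (q i - avg)) := by
          simp only [mul_left_comm _ (Real.exp _), ← mul_sum, mul_sub, sum_sub_distrib, ← sum_mul,
            hsum, one_mul, avg, sub_self]
      _ ≤ ∑ i, p i * Real.exp (β * q i) * (q i - avg) :=
          sum_le_sum fun i _ => by rw [mul_assoc]; exact mul_le_mul_of_nonneg_left (hterm i) (hp i)
  have := sum_expTilt_mul_sub hp hsum (fun i => β * q i) q avg
  rw [sum_expTilt_mul] at this
  have := div_nonneg hcentered (sum_mul_exp_pos hp hsum (fun i => β * q i)).le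
  linarith

theorem one_sub_mul_exp_neg_mul_sub_le {m β c x : ℝ} (hm : 0 < m) (hm1 : m ≤ 1) (hc : 0 < c)
    (hβ : Real.log (1 / m) ≤ β * c) :
    (1 - m) * (Real.exp (-(β * x)) * (x - c)) ≤ c * m := by
  rcases le_or_gt x c with hxc | hxc
  · have : (1 - m) * (Real.exp (-(β * x)) * (x - c)) ≤ 0 :=
      mul_nonpos_of_nonneg_of_nonpos (by linarith)
        (mul_nonpos_of_nonneg_of_nonpos (Real.exp_pos _).le (by linarith))
    exact this.trans (by positivity)
  set L := Real.log (1 / m)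
  set z := (x - c) / c
  have hmL : Real.exp (-L) = m := by
    rw [← Real.exp_log hm]; simp [L, Real.log_inv]
  have hL : 1 - m ≤ L := by
    have := Real.log_le_sub_one_of_pos hm
    simp only [L, one_div, Real.log_inv]; linarith
  have hz : 0 ≤ z := div_nonneg (by linarith) hc.le
  have hxz : x - c = c * z := (mul_div_cancel₀ _ hc.ne').symm
  have hexp : Real.exp (-(β * x)) ≤ m * Real.exp (-(L * z)) := by
    have : L * (1 + z) ≤ β * x := by
      rw [show 1 + z = x / c by simp only [z]; field_simp; ring,
        ← mul_div_assoc, div_le_iff₀ hc]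
      nlinarith
    rw [← hmL, ← Real.exp_add]
    exact Real.exp_le_exp.2 (by linarith)
  have hLz : L * z * Real.exp (-(L * z)) ≤ 1 := by
    rw [Real.exp_neg, ← div_eq_mul_inv, div_le_one (Real.exp_pos _)]
    linarith [Real.add_one_le_exp (L * z)]
  calc (1 - m) * (Real.exp (-(β * x)) * (x - c))
      ≤ L * (m * Real.exp (-(L * z)) * (c * z)) := by
        rw [hxz]; gcongr
        linarith
    _ = c * m * (L * z * Real.exp (-(L * z))) := by ring
    _ ≤ c * m := mul_le_of_le_one_right (by positivity) hLz

theorem sum_erase_mul_exp_neg_mul_sub_le [DecidableEq ι] (hp : ∀ i, 0 ≤ p i)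
    (hsum : ∑ i, p i = 1) (x : ι → ℝ) {i₀ : ι} (hpos : 0 < p i₀) {β c : ℝ} (hc : 0 < c)
    (hβ : Real.log (1 / p i₀) ≤ β * c) :
    ∑ i ∈ univ.erase i₀, p i * Real.exp (-(β * x i)) * (x i - c) ≤ c * p i₀ := by
  have hmass : ∑ i ∈ univ.erase i₀, p i = 1 - p i₀ := by
    rw [sum_erase_eq_sub (mem_univ _), hsum]
  have hp1 : p i₀ ≤ 1 := by linarith [sum_nonneg fun i (_ : i ∈ univ.erase i₀) => hp i]
  rcases hp1.lt_or_eq with hp1 | hp1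
  · have hterm : ∀ i, (1 - p i₀) * (p i * Real.exp (-(β * x i)) * (x i - c)) ≤ p i * (c * p i₀) :=
      fun i => calc
        _ = p i * ((1 - p i₀) * (Real.exp (-(β * x i)) * (x i - c))) := by ring
        _ ≤ _ := mul_le_mul_of_nonneg_left
          (one_sub_mul_exp_neg_mul_sub_le hpos hp1.le hc hβ) (hp i)
    refine le_of_mul_le_mul_left ?_ (sub_pos.2 hp1)
    calc _ ≤ ∑ i ∈ univ.erase i₀, p i * (c * p i₀) := by
          rw [mul_sum]; exact sum_le_sum fun i _ => hterm i
      _ = _ := by rw [← sum_mul, hmass]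
  · -- all the mass sits on `i₀`
    have hzero : ∀ i ∈ univ.erase i₀, p i = 0 :=
      (sum_eq_zero_iff_of_nonneg fun i _ => hp i).1 (by linarith)
    rw [sum_eq_zero fun i hi => by simp [hzero i hi]]
    positivity

theorem sub_sum_expTilt_mul_le [DecidableEq ι] (hp : ∀ i, 0 ≤ p i) (hsum : ∑ i, p i = 1)
    {q : ι → ℝ} {i₀ : ι} (hpos : 0 < p i₀) {β c : ℝ} (hc : 0 < c)
    (hβ : Real.log (1 / p i₀) ≤ β * c) :
    q i₀ - ∑ i, expTilt p (fun i => β * q i) i * q i ≤ c := by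
  set x := fun i => q i₀ - q i
  have hrest := sum_erase_mul_exp_neg_mul_sub_le hp hsum x hpos hc hβ
  have hnum : ∑ i, p i * Real.exp (β * q i) * (x i - c) ≤ 0 := by
    have hrescale : ∀ i, p i * Real.exp (β * q i) * (x i - c)
        = Real.exp (β * q i₀) * (p i * Real.exp (-(β * x i)) * (x i - c)) := fun i => by
      rw [show β * q i = β * q i₀ + -(β * x i) by simp only [x]; ring, Real.exp_add]
      ring
    rw [sum_congr rfl fun i _ => hrescale i, ← mul_sum, ← add_sum_erase _ _ (mem_univ i₀)]
    refine mul_nonpos_of_nonneg_of_nonpos (Real.exp_pos _).le ?_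
    simp only [x, sub_self, mul_zero, neg_zero, Real.exp_zero, mul_one, zero_sub] at hrest ⊢
    linarith
  have hcentered : ∑ i, expTilt p (fun i => β * q i) i * (x i - c)
      = q i₀ - c - ∑ i, expTilt p (fun i => β * q i) i * q i := by
    simp only [x, mul_sub, sum_sub_distrib, ← sum_mul, sum_expTilt hp hsum, one_mul]
    ring
  have := div_nonpos_of_nonpos_of_nonneg hnum (sum_mul_exp_pos hp hsum (fun i => β * q i)).le
  rw [← sum_expTilt_mul, hcentered] at this
  linarith

end ExpTilt

section Comparison

variable {ι : Type*} [Finite ι] {H : (ι → ℝ) → ι → ℝ} {γ : ℝ} {X Q : ι → ℝ}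

theorem le_of_le_map_of_isFixedPt (hγ : γ < 1) (hmono : Monotone H)
    (hshift : ∀ Q c, H (Q + Function.const ι c) = H Q + Function.const ι (γ * c))
    (hX : Function.IsFixedPt H X) (hQ : Q ≤ H Q) : Q ≤ X := by
  cases isEmpty_or_nonempty ι
  · exact fun i => isEmptyElim i
  obtain ⟨i₀, hi₀⟩ := Finite.exists_min (X - Q)
  obtain ⟨m, hm⟩ : ∃ m, X i₀ - Q i₀ = m := ⟨_, rfl⟩
  simp only [Pi.sub_apply, hm] at hi₀
  have hbelow : Q + Function.const ι m ≤ X := fun i => by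
    simp only [Pi.add_apply, Function.const_apply]; linarith [hi₀ i]
  have hcontract : γ * m ≤ m := by
    have := hmono hbelow i₀
    rw [hshift, hX.eq] at this
    simp only [Pi.add_apply, Function.const_apply] at this
    linarith [hQ i₀]
  have hm0 : 0 ≤ m := by nlinarith
  intro i
  linarith [hi₀ i]

theorem le_of_map_le_of_isFixedPt (hγ : γ < 1) (hmono : Monotone H)
    (hshift : ∀ Q c, H (Q + Function.const ι c) = H Q + Function.const ι (γ * c))
    (hX : Function.IsFixedPt H X) (hQ : H Q ≤ Q) : X ≤ Q := by
  cases isEmpty_or_nonempty ι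
  · exact fun i => isEmptyElim i
  obtain ⟨i₀, hi₀⟩ := Finite.exists_max (X - Q)
  obtain ⟨M, hM⟩ : ∃ M, X i₀ - Q i₀ = M := ⟨_, rfl⟩
  simp only [Pi.sub_apply, hM] at hi₀
  have habove : X ≤ Q + Function.const ι M := fun i => by
    simp only [Pi.add_apply, Function.const_apply]; linarith [hi₀ i]
  have hcontract : M ≤ γ * M := by
    have := hmono habove i₀
    rw [hshift, hX.eq] at this
    simp only [Pi.add_apply, Function.const_apply] at this
    linarith [hQ i₀]
  have hM0 : M ≤ 0 := by nlinarith
  intro i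
  linarith [hi₀ i]

end Comparison

section Bellman

variable {S A : Type} [Fintype S] [Fintype A] {R : S → A → ℝ} {P : S → A → S → ℝ} {γ : ℝ}

theorem monotone_bellmanPolicy (hP : ∀ s a s', 0 ≤ P s a s') (hγ : 0 ≤ γ) {π : S → A → ℝ}
    (hπ : ∀ s a, 0 ≤ π s a) : Monotone (bellmanPolicy R P γ π) := by
  intro Q Q' h p
  unfold bellmanPolicy
  gcongr with s' _ a' _
  · exact hP _ _ _
  · exact hπ _ _
  · exact h _

theorem bellmanPolicy_add_const (hPsum : ∀ s a, ∑ s', P s a s' = 1) {π : S → A → ℝ}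
    (hπ : ∀ s, ∑ a, π s a = 1) (Q : S × A → ℝ) (c : ℝ) :
    bellmanPolicy R P γ π (Q + Function.const _ c)
      = bellmanPolicy R P γ π Q + Function.const _ (γ * c) := by
  funext p
  simp only [bellmanPolicy, Pi.add_apply, Function.const_apply, mul_add, sum_add_distrib,
    ← sum_mul, hπ, one_mul, hPsum]
  ring

theorem bellmanPolicy_fixedPt_nonneg (hR : ∀ s a, 0 ≤ R s a) (hP : ∀ s a s', 0 ≤ P s a s')
    (hPsum : ∀ s a, ∑ s', P s a s' = 1) (hγ0 : 0 ≤ γ) (hγ1 : γ < 1) {π : S → A → ℝ}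
    (hπ : ∀ s a, 0 ≤ π s a) (hπsum : ∀ s, ∑ a, π s a = 1) {Q : S × A → ℝ}
    (hQ : Function.IsFixedPt (bellmanPolicy R P γ π) Q) : 0 ≤ Q :=
  le_of_le_map_of_isFixedPt hγ1 (monotone_bellmanPolicy hP hγ0 hπ)
    (bellmanPolicy_add_const hPsum hπsum) hQ fun p => by simp [bellmanPolicy, hR]

theorem bellmanPolicy_fixedPt_mono (hP : ∀ s a s', 0 ≤ P s a s')
    (hPsum : ∀ s a, ∑ s', P s a s' = 1) (hγ0 : 0 ≤ γ) (hγ1 : γ < 1) {π π' : S → A → ℝ}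
    (hπ' : ∀ s a, 0 ≤ π' s a) (hπ'sum : ∀ s, ∑ a, π' s a = 1) {Q Q' : S × A → ℝ}
    (hQ : Function.IsFixedPt (bellmanPolicy R P γ π) Q)
    (hQ' : Function.IsFixedPt (bellmanPolicy R P γ π') Q')
    (himp : ∀ s, ∑ a, π s a * Q (s, a) ≤ ∑ a, π' s a * Q (s, a)) : Q ≤ Q' := by
  refine le_of_le_map_of_isFixedPt hγ1 (monotone_bellmanPolicy hP hγ0 hπ')
    (bellmanPolicy_add_const hPsum hπ'sum) hQ' fun p => ?_
  calc Q p = bellmanPolicy R P γ π Q p := (congrFun hQ.eq p).symm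
    _ ≤ bellmanPolicy R P γ π' Q p := by
      unfold bellmanPolicy
      gcongr R p.1 p.2 + γ * ∑ s', P p.1 p.2 s' * ?_ with s'
      · exact hP _ _ _
      · exact himp s'

variable [Nonempty A]

theorem monotone_bellmanOpt (hP : ∀ s a s', 0 ≤ P s a s') (hγ : 0 ≤ γ) :
    Monotone (bellmanOpt R P γ) := by
  intro Q Q' h p
  unfold bellmanOpt
  gcongr with s' _
  · exact hP _ _ _
  · exact h _

theorem bellmanOpt_add_const (hPsum : ∀ s a, ∑ s', P s a s' = 1) (Q : S × A → ℝ) (c : ℝ) :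
    bellmanOpt R P γ (Q + Function.const _ c) = bellmanOpt R P γ Q + Function.const _ (γ * c) := by
  funext p
  simp only [bellmanOpt, Pi.add_apply, Function.const_apply, ← sup'_add, mul_add, sum_add_distrib,
    ← sum_mul, hPsum, one_mul]
  ring

theorem bellmanPolicy_le_bellmanOpt (hP : ∀ s a s', 0 ≤ P s a s') (hγ : 0 ≤ γ)
    {π : S → A → ℝ} (hπ : ∀ s a, 0 ≤ π s a) (hπsum : ∀ s, ∑ a, π s a = 1) (Q : S × A → ℝ) :
    bellmanPolicy R P γ π Q ≤ bellmanOpt R P γ Q := by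
  intro p
  unfold bellmanPolicy bellmanOpt
  gcongr with s' _
  · exact hP _ _ _
  · exact sum_mul_le_of_forall_le (hπ s') (hπsum s') fun a =>
      le_sup' (fun a' => Q (s', a')) (mem_univ a)

theorem bellmanOpt_sub_bellmanPolicy_le (hP : ∀ s a s', 0 ≤ P s a s')
    (hPsum : ∀ s a, ∑ s', P s a s' = 1) (hγ : 0 ≤ γ) {π : S → A → ℝ} {Q₁ Q₂ : S × A → ℝ} {B : ℝ}
    (h : ∀ s, univ.sup' univ_nonempty (fun a => Q₁ (s, a)) - ∑ a, π s a * Q₂ (s, a) ≤ B)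
    (p : S × A) : bellmanOpt R P γ Q₁ p - bellmanPolicy R P γ π Q₂ p ≤ γ * B := by
  have : bellmanOpt R P γ Q₁ p - bellmanPolicy R P γ π Q₂ p = γ * ∑ s', P p.1 p.2 s' *
      (univ.sup' univ_nonempty (fun a => Q₁ (s', a)) - ∑ a, π s' a * Q₂ (s', a)) := by
    simp only [bellmanOpt, bellmanPolicy, mul_sub, sum_sub_distrib]
    ring
  rw [this]
  exact mul_le_mul_of_nonneg_left (sum_mul_le_of_forall_le (hP p.1 p.2) (hPsum p.1 p.2) h) hγ

theorem bellmanOpt_fixedPt_le (hR : ∀ s a, R s a ≤ 1) (hP : ∀ s a s', 0 ≤ P s a s')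
    (hPsum : ∀ s a, ∑ s', P s a s' = 1) (hγ0 : 0 ≤ γ) (hγ1 : γ < 1) {Q : S × A → ℝ}
    (hQ : Function.IsFixedPt (bellmanOpt R P γ) Q) (p : S × A) : Q p ≤ 1 / (1 - γ) := by
  refine le_of_map_le_of_isFixedPt hγ1 (monotone_bellmanOpt hP hγ0) (bellmanOpt_add_const hPsum)
    hQ (Q := Function.const _ (1 / (1 - γ))) (fun p => ?_) p
  have : γ * (1 / (1 - γ)) + 1 = 1 / (1 - γ) := by field_simp [(sub_pos.2 hγ1).ne']; ring
  simp only [bellmanOpt, Function.const_apply, sup'_const, ← sum_mul, hPsum, one_mul]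
  linarith [hR p.1 p.2]

theorem bellmanPolicy_fixedPt_le_bellmanOpt_fixedPt (hP : ∀ s a s', 0 ≤ P s a s')
    (hPsum : ∀ s a, ∑ s', P s a s' = 1) (hγ0 : 0 ≤ γ) (hγ1 : γ < 1) {π : S → A → ℝ}
    (hπ : ∀ s a, 0 ≤ π s a) (hπsum : ∀ s, ∑ a, π s a = 1) {Q Qstar : S × A → ℝ}
    (hQ : Function.IsFixedPt (bellmanPolicy R P γ π) Q)
    (hQstar : Function.IsFixedPt (bellmanOpt R P γ) Qstar) : Q ≤ Qstar :=
  le_of_map_le_of_isFixedPt hγ1 (monotone_bellmanPolicy hP hγ0 hπ)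
    (bellmanPolicy_add_const hPsum hπsum) hQ
    ((bellmanPolicy_le_bellmanOpt hP hγ0 hπ hπsum Qstar).trans hQstar.eq.le)

theorem bellmanOpt_fixedPt_sub_bellmanPolicy_fixedPt_le (hR : ∀ s a, R s a ∈ Set.Icc 0 1)
    (hP : ∀ s a s', 0 ≤ P s a s') (hPsum : ∀ s a, ∑ s', P s a s' = 1) (hγ0 : 0 ≤ γ) (hγ1 : γ < 1)
    {π : S → A → ℝ} (hπ : ∀ s a, 0 ≤ π s a) (hπsum : ∀ s, ∑ a, π s a = 1) {Q Qstar : S × A → ℝ}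
    (hQ : Function.IsFixedPt (bellmanPolicy R P γ π) Q)
    (hQstar : Function.IsFixedPt (bellmanOpt R P γ) Qstar) (p : S × A) :
    Qstar p - Q p ≤ γ / (1 - γ) := by
  have hQ0 := bellmanPolicy_fixedPt_nonneg (fun s a => (hR s a).1) hP hPsum hγ0 hγ1 hπ hπsum hQ
  have := bellmanOpt_sub_bellmanPolicy_le (R := R) (π := π) (Q₁ := Qstar) (Q₂ := Q)
    (B := 1 / (1 - γ)) hP hPsum hγ0 (fun s => ?_) p
  · rwa [hQstar.eq, hQ.eq, mul_one_div] at this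
  have hsup := sup'_le univ_nonempty (fun a => Qstar (s, a)) fun a _ =>
    bellmanOpt_fixedPt_le (fun s a => (hR s a).2) hP hPsum hγ0 hγ1 hQstar (s, a)
  have := sum_nonneg fun a (_ : a ∈ univ) => mul_nonneg (hπ s a) (hQ0 (s, a))
  linarith

theorem npg_step_sub_le [DecidableEq A] (hP : ∀ s a s', 0 ≤ P s a s')
    (hPsum : ∀ s a, ∑ s', P s a s' = 1) (hγ0 : 0 ≤ γ) (hγ1 : γ < 1) {π : S → A → ℝ}
    (hπ : ∀ s a, 0 ≤ π s a) (hπsum : ∀ s, ∑ a, π s a = 1) {β c m δ : ℝ}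
    {Q Q' Qstar : S × A → ℝ} {a₀ : S → A}
    (hQ : Function.IsFixedPt (bellmanPolicy R P γ π) Q)
    (hQ' : Function.IsFixedPt (bellmanPolicy R P γ fun s => expTilt (π s) fun a => β * Q (s, a)) Q')
    (hQstar : Function.IsFixedPt (bellmanOpt R P γ) Qstar)
    (hmax : ∀ s a, Q (s, a) ≤ Q (s, a₀ s)) (hm : 0 < m) (hma : ∀ s, m ≤ π s (a₀ s)) (hc : 0 < c)
    (hβ : Real.log (1 / m) ≤ β * c) (hδ : ∀ p, Qstar p - Q p ≤ δ) (p : S × A) :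
    Qstar p - Q' p ≤ γ * (δ + c) := by
  set π' := fun s => expTilt (π s) fun a => β * Q (s, a)
  have hπ' : ∀ s a, 0 ≤ π' s a := fun s => expTilt_nonneg (hπ s) (hπsum s) _
  have hπ'sum : ∀ s, ∑ a, π' s a = 1 := fun s => sum_expTilt (hπ s) (hπsum s) _
  have himp : ∀ s, ∑ a, π s a * Q (s, a) ≤ ∑ a, π' s a * Q (s, a) := fun s => by
    have hm1 : m ≤ 1 := (hma s).trans (hπsum s ▸ single_le_sum (fun a _ => hπ s a) (mem_univ _))
    have hβ0 : 0 ≤ β :=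
      nonneg_of_mul_nonneg_left ((Real.log_nonneg (one_le_one_div hm hm1)).trans hβ) hc
    exact sum_mul_le_sum_expTilt_mul (hπ s) (hπsum s) hβ0 _
  have hmono : Q ≤ Q' := bellmanPolicy_fixedPt_mono hP hPsum hγ0 hγ1 hπ' hπ'sum hQ hQ' himp
  have hgap : ∀ s, univ.sup' univ_nonempty (fun a => Qstar (s, a)) - ∑ a, π' s a * Q' (s, a)
      ≤ δ + c := fun s => by
    have hsup : univ.sup' univ_nonempty (fun a => Qstar (s, a)) ≤ Q (s, a₀ s) + δ :=
      sup'_le _ _ fun a _ => by linarith [hδ (s, a), hmax s a]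
    have hlog : Real.log (1 / π s (a₀ s)) ≤ β * c :=
      (Real.log_le_log (one_div_pos.2 (hm.trans_le (hma s)))
        (one_div_le_one_div_of_le hm (hma s))).trans hβ
    have hgreedy := sub_sum_expTilt_mul_le (q := fun a => Q (s, a)) (hπ s) (hπsum s)
      (hm.trans_le (hma s)) hc hlog
    have hlift : ∑ a, π' s a * Q (s, a) ≤ ∑ a, π' s a * Q' (s, a) :=
      sum_le_sum fun a _ => mul_le_mul_of_nonneg_left (hmono _) (hπ' s a)
    linarith
  have := bellmanOpt_sub_bellmanPolicy_le (R := R) hP hPsum hγ0 hgap p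
  rwa [hQstar.eq, hQ'.eq] at this

theorem npg_error_bound_succ {γ : ℝ} (hγ1 : γ < 1) (t : ℕ) :
    γ * (γ ^ (t + 1) * (2 - γ ^ t) / (1 - γ) + γ ^ (2 * t + 1))
      = γ ^ (t + 2) * (2 - γ ^ (t + 1)) / (1 - γ) := by
  field_simp [(sub_pos.2 hγ1).ne']
  ring

theorem npg_sub_le [DecidableEq A] (hR : ∀ s a, R s a ∈ Set.Icc 0 1)
    (hP : ∀ s a s', 0 ≤ P s a s') (hPsum : ∀ s a, ∑ s', P s a s' = 1) (hγ0 : 0 < γ) (hγ1 : γ < 1)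
    {π : ℕ → S → A → ℝ} (hπ : ∀ t s a, 0 ≤ π t s a) (hπsum : ∀ t s, ∑ a, π t s a = 1)
    {Qpi : ℕ → S × A → ℝ} (hQpi : ∀ t, Function.IsFixedPt (bellmanPolicy R P γ (π t)) (Qpi t))
    {β : ℕ → ℝ} (hsucc : ∀ t s, π (t + 1) s = expTilt (π t s) fun a => β t * Qpi t (s, a))
    {Qstar : S × A → ℝ} (hQstar : Function.IsFixedPt (bellmanOpt R P γ) Qstar)
    {ats : ℕ → S → A} (hats : ∀ t s a, Qpi t (s, a) ≤ Qpi t (s, ats t s))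
    {m : ℕ → ℝ} (hm : ∀ t, 0 < m t) (hma : ∀ t s, m t ≤ π t s (ats t s))
    (hβ : ∀ t, Real.log (1 / m (t + 1)) ≤ β (t + 1) * γ ^ (2 * t + 1)) (T : ℕ) (p : S × A) :
    Qstar p - Qpi T p ≤ 2 * γ ^ T / (1 - γ) := by
  have hsub : ∀ t p, Qstar p - Qpi t p ≤ γ / (1 - γ) := fun t =>
    bellmanOpt_fixedPt_sub_bellmanPolicy_fixedPt_le hR hP hPsum hγ0.le hγ1 (hπ t) (hπsum t)
      (hQpi t) hQstar
  have hsucc_le : ∀ t p, Qstar p - Qpi (t + 1) p ≤ γ ^ (t + 1) * (2 - γ ^ t) / (1 - γ) := by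
    intro t
    induction t with
    | zero =>
      intro p
      convert hsub 1 p using 2
      ring
    | succ t ih =>
      intro p
      have hQ' := hQpi (t + 2)
      rw [funext (hsucc (t + 1))] at hQ'
      rw [← npg_error_bound_succ hγ1]
      exact npg_step_sub_le hP hPsum hγ0.le hγ1 (hπ (t + 1)) (hπsum (t + 1)) (hQpi (t + 1)) hQ'
        hQstar (hats (t + 1)) (hm (t + 1)) (hma (t + 1)) (by positivity) (hβ t) ih p
  cases T with
  | zero =>
    refine (hsub 0 p).trans ?_
    gcongr
    linarith
  | succ t =>
    refine (hsucc_le t p).trans ?_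
    rw [mul_comm 2]
    gcongr
    linarith [pow_nonneg hγ0.le t]

end Bellman

theorem stmt_9 {S A : Type} [Fintype S] [Fintype A] [Nonempty S] [Nonempty A]
    (R : S → A → ℝ) (P : S → A → S → ℝ) (γ : ℝ) (hγ : γ ∈ Set.Ioo (0:ℝ) 1)
    (hPpos : ∀ s a s', 0 ≤ P s a s') (hPsum : ∀ s a, ∑ s', P s a s' = 1)
    (hR : ∀ s a, R s a ∈ Set.Icc (0:ℝ) 1)
    (π : ℕ → S → A → ℝ)
    (hπ0 : ∀ s a, π 0 s a = 1 / (Fintype.card A))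
    (Qpi : ℕ → S × A → ℝ)
    (hQpi : ∀ t, bellmanPolicy R P γ (π t) (Qpi t) = Qpi t)
    (β : ℕ → ℝ)
    (hπrec : ∀ t s a, π (t+1) s a
      = π t s a * Real.exp (β t * Qpi t (s, a))
        / ∑ a', π t s a' * Real.exp (β t * Qpi t (s, a')))
    (ats : ℕ → S → A)
    (hats : ∀ t s a, Qpi t (s, a) ≤ Qpi t (s, ats t s))
    (hβ : ∀ t, β t ≥ Real.log
        (1 / (Finset.univ.inf' Finset.univ_nonempty (fun s => π t s (ats t s))))
        * γ / γ ^ (2 * t))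
    (Qstar : S × A → ℝ) (hQstar : bellmanOpt R P γ Qstar = Qstar)
    (T : ℕ) :
    ‖Qstar - Qpi T‖ ≤ 3 * γ ^ T / (1 - γ) ^ 2 := by
  classical
  obtain ⟨hγ0, hγ1⟩ := hγ
  have hsucc : ∀ t s, π (t + 1) s = expTilt (π t s) fun a => β t * Qpi t (s, a) :=
    fun t s => funext (hπrec t s)
  have hA : (0 : ℝ) < Fintype.card A := by exact_mod_cast Fintype.card_pos
  have hπ : ∀ t s, (∀ a, 0 < π t s a) ∧ ∑ a, π t s a = 1 := fun t s =>
    expTilt_iterate_pos (p := fun t => π t s) (fun a => by rw [hπ0]; positivity)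
      (by simp [hπ0, card_univ, hA.ne']) (fun t => hsucc t s) t
  set m := fun t => univ.inf' univ_nonempty fun s => π t s (ats t s)
  have hβ' : ∀ t, Real.log (1 / m (t + 1)) ≤ β (t + 1) * γ ^ (2 * t + 1) := fun t => by
    have h := hβ (t + 1)
    rwa [show 2 * (t + 1) = 2 * t + 1 + 1 by ring, pow_succ, mul_div_mul_right _ _ hγ0.ne',
      ge_iff_le, div_le_iff₀ (by positivity)] at h
  have hsub := npg_sub_le hR hPpos hPsum hγ0 hγ1 (fun t s a => ((hπ t s).1 a).le)
    (fun t s => (hπ t s).2) hQpi hsucc hQstar hats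
    (fun t => (lt_inf'_iff _).2 fun s _ => (hπ t s).1 _) (fun t s => inf'_le _ (mem_univ s)) hβ' T
  have hle := bellmanPolicy_fixedPt_le_bellmanOpt_fixedPt hPpos hPsum hγ0.le hγ1
    (fun s a => ((hπ T s).1 a).le) (fun s => (hπ T s).2) (hQpi T) hQstar
  have h1γ : 0 < 1 - γ := sub_pos.2 hγ1
  rw [pi_norm_le_iff_of_nonneg (by positivity)]
  intro p
  rw [Pi.sub_apply, Real.norm_of_nonneg (sub_nonneg.2 (hle p))]
  calc _ ≤ 2 * γ ^ T / (1 - γ) := hsub p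
    _ ≤ 3 * γ ^ T / (1 - γ) ^ 2 := by
      rw [div_le_div_iff₀ h1γ (by positivity)]
      nlinarith [mul_pos (pow_pos hγ0 T) h1γ]
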